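/- arXiv:1312.7873 — 6 statements merged into one kernel-verified Lean document; each statement's English description precedes it below -/
import Mathlib

section
/- For all real t, the integral (1/(2π)³) ∫_{ℝ³} ln(1 - e^{-|p|²}) dp equals -ζ(5/2)/(8π^{3/2}), where ζ is the Riemann zeta function. -/
/-!
Expanding `log (1 - e^{-x}) = -∑_{n ≥ 1} e^{-n x} / n` and integrating term by term, each term is
a Gaussian integral `∫ e^{-n ‖v‖²} dv = (π / n)^{d/2}` over `ℝ^d`, so the integral equals
`-π^{d/2} ∑ n^{-(d/2 + 1)} = -π^{d/2} ζ(d/2 + 1)`. The exchange of sum and integral is legitimate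
because all terms have the same sign and the resulting series converges for `d ≥ 1`.
-/

open MeasureTheory Real Module

lemma hasSum_log_one_sub_exp_neg {x : ℝ} (hx : 0 < x) :
    HasSum (fun n : ℕ => -(rexp (-(n + 1) * x) / (n + 1))) (log (1 - rexp (-x))) := by
  have hexp : |rexp (-x)| < 1 := by
    rw [abs_of_pos (exp_pos _), exp_lt_one_iff]; linarith
  have h := (hasSum_pow_div_log_of_abs_lt_one hexp).neg
  rw [neg_neg] at h
  refine h.congr_fun fun n => ?_
  rw [← exp_nat_mul]; push_cast; ring_nf

lemma summable_one_div_nat_add_one_rpow {s : ℝ} (hs : 1 < s) :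
    Summable (fun n : ℕ => 1 / ((n : ℝ) + 1) ^ s) := by
  simpa using (summable_nat_add_iff 1).mpr (summable_one_div_nat_rpow.mpr hs)

lemma riemannZeta_ofReal_eq_tsum {s : ℝ} (hs : 1 < s) :
    riemannZeta s = ↑(∑' n : ℕ, 1 / ((n : ℝ) + 1) ^ s) := by
  rw [zeta_eq_tsum_one_div_nat_add_one_cpow (by simpa using hs), Complex.ofReal_tsum]
  congr 1 with n
  rw [Complex.ofReal_div, Complex.ofReal_cpow (by positivity)]
  push_cast; rfl

section InnerProductSpace

variable {V : Type*} [NormedAddCommGroup V] [InnerProductSpace ℝ V] [FiniteDimensional ℝ V]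

lemma half_finrank_pos [Nontrivial V] : 0 < (finrank ℝ V / 2 : ℝ) := by
  have := finrank_pos (R := ℝ) (M := V); positivity

variable [MeasurableSpace V] [BorelSpace V]

lemma integrable_rexp_neg_mul_sq_norm {b : ℝ} (hb : 0 < b) :
    Integrable (fun v : V => rexp (-b * ‖v‖ ^ 2)) :=
  .of_integral_ne_zero <| by
    rw [GaussianFourier.integral_rexp_neg_mul_sq_norm hb]; positivity

lemma integral_rexp_neg_mul_sq_norm_div_self {b : ℝ} (hb : 0 < b) :
    ∫ v : V, rexp (-b * ‖v‖ ^ 2) / b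
      = π ^ (finrank ℝ V / 2 : ℝ) / b ^ (finrank ℝ V / 2 + 1 : ℝ) := by
  rw [integral_div, GaussianFourier.integral_rexp_neg_mul_sq_norm hb, div_rpow pi_pos.le hb.le,
    rpow_add_one hb.ne', div_div]

theorem integral_log_one_sub_exp_neg_sq_norm [Nontrivial V] :
    ∫ v : V, log (1 - rexp (-‖v‖ ^ 2)) = -(π ^ (finrank ℝ V / 2 : ℝ) *
      ∑' n : ℕ, 1 / ((n : ℝ) + 1) ^ (finrank ℝ V / 2 + 1 : ℝ)) := by
  set d : ℝ := finrank ℝ V / 2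
  have hd : 1 < d + 1 := lt_add_of_pos_left 1 half_finrank_pos
  let G : ℕ → V → ℝ := fun n v => rexp (-(n + 1) * ‖v‖ ^ 2) / (n + 1)
  have hG_int n : ∫ v, G n v = π ^ d * (1 / ((n : ℝ) + 1) ^ (d + 1)) := by
    rw [integral_rexp_neg_mul_sq_norm_div_self (Nat.cast_add_one_pos n), mul_one_div]
  have hG_norm n : ∫ v, ‖-G n v‖ = ∫ v, G n v := by
    simp only [norm_neg, fun v => norm_of_nonneg (by positivity : 0 ≤ G n v)]
  have hsum : HasSum (fun n => ∫ v, -G n v) (∫ v, ∑' n, -G n v) :=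
    hasSum_integral_of_summable_integral_norm
      (fun n => ((integrable_rexp_neg_mul_sq_norm (Nat.cast_add_one_pos n)).div_const _).neg)
      (by simpa only [hG_norm, hG_int] using
        (summable_one_div_nat_add_one_rpow hd).mul_left (π ^ d))
  have hae : ∀ᵐ v : V, log (1 - rexp (-‖v‖ ^ 2)) = ∑' n, -G n v := by
    filter_upwards [(by simp [ae_iff, measure_singleton] : ∀ᵐ v : V, v ≠ 0)] with v hv
    exact (hasSum_log_one_sub_exp_neg (by positivity)).tsum_eq.symm
  rw [integral_congr_ae hae, ← hsum.tsum_eq]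
  simp only [integral_neg, hG_int, tsum_neg, tsum_mul_left]

theorem ofReal_integral_log_one_sub_exp_neg_sq_norm [Nontrivial V] :
    ((∫ v : V, log (1 - rexp (-‖v‖ ^ 2)) : ℝ) : ℂ)
      = -(π : ℂ) ^ (finrank ℝ V / 2 : ℂ) * riemannZeta (finrank ℝ V / 2 + 1) := by
  have hζ := riemannZeta_ofReal_eq_tsum (lt_add_of_pos_left 1 (half_finrank_pos (V := V)))
  push_cast at hζ
  rw [integral_log_one_sub_exp_neg_sq_norm, hζ]
  push_cast [Complex.ofReal_cpow pi_pos.le]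
  ring

end InnerProductSpace

theorem spin_wave_constant :
    ∀ _t : ℝ,
    (((1 / (2 * π) ^ 3 *
        ∫ p : EuclideanSpace ℝ (Fin 3), Real.log (1 - Real.exp (-‖p‖ ^ 2))) : ℝ) : ℂ)
      = - riemannZeta (5 / 2) / (8 * (π : ℂ) ^ ((3 : ℂ) / 2)) := by
  intro _
  have hπ : (π : ℂ) ^ ((3 : ℂ) / 2) * (π : ℂ) ^ ((3 : ℂ) / 2) = (π : ℂ) ^ 3 := by
    rw [← Complex.cpow_add _ _ (Complex.ofReal_ne_zero.mpr pi_ne_zero)]; norm_num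
  rw [Complex.ofReal_mul, ofReal_integral_log_one_sub_exp_neg_sq_norm, finrank_euclideanSpace_fin]
  norm_num
  field_simp
  linear_combination (-8 * riemannZeta (5 / 2)) * hπ
end

section
/- If f : ℕ × ℕ → ℝ satisfies f(i,k) ≤ 2(f(i,j) + f(j,k)) for all i < j < k and f(i,k) ≥ 0, then for all i and n ≥ 1, Σ_{j=0}^{n-1} f(i+j, i+j+1) ≥ f(i, i+n)/(2n). -/
theorem chain_aux (f : ℕ × ℕ → ℝ)
    (htri : ∀ i j k : ℕ, i < j → j < k → f (i, k) ≤ 2 * (f (i, j) + f (j, k)))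
    (hpos : ∀ i k : ℕ, 0 ≤ f (i, k)) :
    ∀ n : ℕ, 1 ≤ n → ∀ i : ℕ,
      f (i, i + n) ≤ 2 ^ (Nat.clog 2 n) * ∑ j ∈ Finset.range n, f (i + j, i + j + 1) := by
  intro n
  induction n using Nat.strong_induction_on with
  | _ n ih =>
    intro hn i
    rcases Nat.lt_or_ge n 2 with h2 | h2
    · interval_cases n
      simp
    · set m := (n + 1) / 2 with hm
      have hm1 : 1 ≤ m := by omega
      have hmn : m < n := by omega
      have hnm1 : 1 ≤ n - m := by omega
      have hnmn : n - m < n := by omega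
      have hle : n - m ≤ m := by omega
      have hclog : Nat.clog 2 n = Nat.clog 2 m + 1 := by
        rw [Nat.clog_of_two_le one_lt_two h2]
        congr 1
      have hclog2 : Nat.clog 2 (n - m) ≤ Nat.clog 2 m := Nat.clog_mono_right _ hle
      have h1 := ih m hmn hm1 i
      have h2' := ih (n - m) hnmn hnm1 (i + m)
      have htr := htri i (i + m) (i + n) (by omega) (by omega)
      have hrw : i + m + (n - m) = i + n := by omega
      rw [hrw] at h2'
      have hS2nonneg : (0:ℝ) ≤ ∑ j ∈ Finset.range (n - m), f (i + m + j, i + m + j + 1) :=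
        Finset.sum_nonneg fun _ _ => hpos _ _
      have hpow : (2:ℝ) ^ (Nat.clog 2 (n - m)) ≤ 2 ^ (Nat.clog 2 m) :=
        pow_le_pow_right₀ one_le_two hclog2
      have h2'' : f (i + m, i + n) ≤
          2 ^ (Nat.clog 2 m) * ∑ j ∈ Finset.range (n - m), f (i + m + j, i + m + j + 1) :=
        h2'.trans (mul_le_mul_of_nonneg_right hpow hS2nonneg)
      have hsum : ∑ j ∈ Finset.range n, f (i + j, i + j + 1)
          = (∑ j ∈ Finset.range m, f (i + j, i + j + 1))
            + ∑ j ∈ Finset.range (n - m), f (i + m + j, i + m + j + 1) := by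
        have : n = m + (n - m) := by omega
        rw [this, Finset.sum_range_add]
        simp [Nat.add_assoc]
      rw [hsum, hclog]
      have hpownn : (0:ℝ) ≤ 2 ^ (Nat.clog 2 m) := by positivity
      calc f (i, i + n) ≤ 2 * (f (i, i + m) + f (i + m, i + n)) := htr
        _ ≤ 2 * (2 ^ (Nat.clog 2 m) * (∑ j ∈ Finset.range m, f (i + j, i + j + 1))
              + 2 ^ (Nat.clog 2 m) * ∑ j ∈ Finset.range (n - m), f (i + m + j, i + m + j + 1)) := by
            nlinarith [h1, h2'']
        _ = 2 ^ (Nat.clog 2 m + 1) * ((∑ j ∈ Finset.range m, f (i + j, i + j + 1))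
              + ∑ j ∈ Finset.range (n - m), f (i + m + j, i + m + j + 1)) := by ring

theorem chain_inequality (f : ℕ × ℕ → ℝ)
    (htri : ∀ i j k : ℕ, i < j → j < k → f (i, k) ≤ 2 * (f (i, j) + f (j, k)))
    (hpos : ∀ i k : ℕ, 0 ≤ f (i, k)) :
    ∀ (i n : ℕ), 1 ≤ n →
      ∑ j ∈ Finset.range n, f (i + j, i + j + 1) ≥ f (i, i + n) / (2 * n) := by
  intro i n hn
  have haux := chain_aux f htri hpos n hn i
  have hpow : (2:ℕ) ^ (Nat.clog 2 n) ≤ 2 * n := by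
    rcases Nat.lt_or_ge n 2 with h2 | h2
    · interval_cases n
      simp
    · have hlt := Nat.pow_pred_clog_lt_self one_lt_two (by omega : 1 < n)
      have hp : 0 < Nat.clog 2 n := Nat.clog_pos one_lt_two h2
      have hlt2 : 2 ^ (Nat.clog 2 n - 1) < n := hlt
      have : (2:ℕ) ^ (Nat.clog 2 n) = 2 * 2 ^ (Nat.clog 2 n - 1) := by
        rw [← pow_succ']
        congr 1
        omega
      omega
  have hpowR : (2:ℝ) ^ (Nat.clog 2 n) ≤ 2 * n := by
    exact_mod_cast hpow
  have hSnn : (0:ℝ) ≤ ∑ j ∈ Finset.range n, f (i + j, i + j + 1) :=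
    Finset.sum_nonneg fun _ _ => hpos _ _
  have hnpos : (0:ℝ) < 2 * n := by positivity
  rw [ge_iff_le, div_le_iff₀ hnpos]
  calc f (i, i + n) ≤ 2 ^ (Nat.clog 2 n) * ∑ j ∈ Finset.range n, f (i + j, i + j + 1) := haux
    _ ≤ (∑ j ∈ Finset.range n, f (i + j, i + j + 1)) * (2 * n) := by nlinarith
end

section
/- For every real t > 0, the modified Bessel function satisfies I₀(t) ≤ 2e^t/√(πt). -/
/-!
Let `φ(u) = u^{-1/2} e^{-tu}`. Since `1 - s² ≥ 1 - |s|` and `-st ≤ |s| t = t - t(1 - |s|)`, the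
integrand is at most `e^t φ(1 - |s|) ≤ e^t (φ(1 - s) + φ(1 + s))`. Each shifted copy integrates over
`(-1, 1)` to `∫₀² φ ≤ ∫₀^∞ φ = Γ(1/2)/√t = √(π/t)`, so `π I₀(t) ≤ 2 e^t √(π/t)`.
-/

open Real

/-- The modified Bessel function of the first kind of order `0`, via its integral
representation `I₀(t) = (1/π) ∫_{-1}^{1} (1-s²)^{-1/2} e^{-st} ds`. -/
noncomputable def besselI0 (t : ℝ) : ℝ :=
  (1 / π) * ∫ s in Set.Ioo (-1 : ℝ) 1, (1 - s ^ 2) ^ (-(1 : ℝ) / 2) * Real.exp (-(s * t))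

open MeasureTheory Set

noncomputable def halfGammaKernel (t u : ℝ) : ℝ := u ^ (-(1 : ℝ) / 2) * exp (-(t * u))

section halfGammaKernel

variable {t : ℝ}

lemma halfGammaKernel_nonneg (t : ℝ) {u : ℝ} (hu : 0 ≤ u) : 0 ≤ halfGammaKernel t u :=
  mul_nonneg (rpow_nonneg hu _) (exp_pos _).le

lemma integrableOn_halfGammaKernel (ht : 0 < t) : IntegrableOn (halfGammaKernel t) (Ioi 0) := by
  refine (integrableOn_rpow_mul_exp_neg_mul_rpow (s := -(1 : ℝ) / 2) (p := 1) (by norm_num)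
    one_pos ht).congr_fun (fun u _ => ?_) measurableSet_Ioi
  simp [halfGammaKernel]

lemma integral_halfGammaKernel (ht : 0 < t) : ∫ u in Ioi 0, halfGammaKernel t u = √(π / t) := by
  have h := integral_rpow_mul_exp_neg_mul_Ioi (a := 1 / 2) one_half_pos ht
  rw [Gamma_one_half_eq, ← sqrt_eq_rpow, ← sqrt_mul' _ pi_pos.le, one_div_mul_eq_div] at h
  rw [← h]
  norm_num [halfGammaKernel]

lemma intervalIntegrable_halfGammaKernel (ht : 0 < t) {a : ℝ} (ha : 0 ≤ a) :
    IntervalIntegrable (halfGammaKernel t) volume 0 a := by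
  rw [intervalIntegrable_iff_integrableOn_Ioc_of_le ha]
  exact (integrableOn_halfGammaKernel ht).mono_set Ioc_subset_Ioi_self

lemma intervalIntegral_halfGammaKernel_le (ht : 0 < t) {a : ℝ} (ha : 0 ≤ a) :
    ∫ u in 0..a, halfGammaKernel t u ≤ √(π / t) := by
  rw [← integral_halfGammaKernel ht, intervalIntegral.integral_of_le ha]
  exact setIntegral_mono_set (integrableOn_halfGammaKernel ht)
    (ae_restrict_of_forall_mem measurableSet_Ioi fun u hu => halfGammaKernel_nonneg t hu.le)
    Ioc_subset_Ioi_self.eventuallyLE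

lemma intervalIntegrable_halfGammaKernel_one_sub (ht : 0 < t) :
    IntervalIntegrable (fun s => halfGammaKernel t (1 - s)) volume (-1) 1 := by
  simpa [show (1 : ℝ) - 2 = -1 by norm_num] using
    ((intervalIntegrable_halfGammaKernel ht zero_le_two).comp_sub_left 1).symm

lemma intervalIntegrable_halfGammaKernel_one_add (ht : 0 < t) :
    IntervalIntegrable (fun s => halfGammaKernel t (1 + s)) volume (-1) 1 := by
  simpa [show (2 : ℝ) - 1 = 1 by norm_num] using
    (intervalIntegrable_halfGammaKernel ht zero_le_two).comp_add_left 1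

lemma integrableOn_halfGammaKernel_reflect (ht : 0 < t) :
    IntegrableOn (fun s => halfGammaKernel t (1 - s) + halfGammaKernel t (1 + s))
      (Ioo (-1) 1) := by
  rw [← integrableOn_Ioc_iff_integrableOn_Ioo,
    ← intervalIntegrable_iff_integrableOn_Ioc_of_le (by norm_num)]
  exact (intervalIntegrable_halfGammaKernel_one_sub ht).add
    (intervalIntegrable_halfGammaKernel_one_add ht)

lemma integral_halfGammaKernel_reflect_le (ht : 0 < t) :
    ∫ s in Ioo (-1 : ℝ) 1, (halfGammaKernel t (1 - s) + halfGammaKernel t (1 + s)) ≤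
      2 * √(π / t) := by
  rw [← integral_Ioc_eq_integral_Ioo, ← intervalIntegral.integral_of_le (by norm_num),
    intervalIntegral.integral_add (intervalIntegrable_halfGammaKernel_one_sub ht)
      (intervalIntegrable_halfGammaKernel_one_add ht),
    intervalIntegral.integral_comp_sub_left (halfGammaKernel t),
    intervalIntegral.integral_comp_add_left (halfGammaKernel t)]
  simp only [sub_self, sub_neg_eq_add, add_neg_cancel, one_add_one_eq_two]
  linarith [intervalIntegral_halfGammaKernel_le ht zero_le_two]

lemma halfGammaKernel_one_sub_abs_le (t s : ℝ) :
    halfGammaKernel t (1 - |s|) ≤ halfGammaKernel t (1 - s) + halfGammaKernel t (1 + s) := by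
  rcases abs_cases s with ⟨h, hs₀⟩ | ⟨h, hs₀⟩ <;> rw [h]
  · exact le_add_of_nonneg_right (halfGammaKernel_nonneg t (by linarith))
  · rw [sub_neg_eq_add]
    exact le_add_of_nonneg_left (halfGammaKernel_nonneg t (by linarith))

end halfGammaKernel

lemma one_sub_sq_rpow_neg_half_le {s : ℝ} (hs : |s| < 1) :
    (1 - s ^ 2) ^ (-(1 : ℝ) / 2) ≤ (1 - |s|) ^ (-(1 : ℝ) / 2) := by
  have h0 := abs_nonneg s
  refine rpow_le_rpow_of_nonpos (by linarith) ?_ (by norm_num)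
  nlinarith [sq_abs s]

lemma besselI0_integrand_le {t s : ℝ} (ht : 0 ≤ t) (hs : |s| < 1) :
    (1 - s ^ 2) ^ (-(1 : ℝ) / 2) * exp (-(s * t)) ≤
      exp t * (halfGammaKernel t (1 - s) + halfGammaKernel t (1 + s)) := calc
  _ ≤ (1 - |s|) ^ (-(1 : ℝ) / 2) * exp (|s| * t) := by
    refine mul_le_mul (one_sub_sq_rpow_neg_half_le hs) (exp_le_exp.2 ?_) (exp_pos _).le
      (rpow_nonneg (by linarith [abs_nonneg s]) _)
    rw [← neg_mul]
    exact mul_le_mul_of_nonneg_right (neg_le_abs s) ht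
  _ = exp t * halfGammaKernel t (1 - |s|) := by
    rw [halfGammaKernel, mul_left_comm, ← exp_add]
    ring_nf
  _ ≤ exp t * (halfGammaKernel t (1 - s) + halfGammaKernel t (1 + s)) := by
    gcongr
    exact halfGammaKernel_one_sub_abs_le t s

theorem besselI0_bound (t : ℝ) (ht : 0 < t) :
    besselI0 t ≤ 2 * Real.exp t / Real.sqrt (π * t) := by
  have hint : ∫ s in Ioo (-1 : ℝ) 1, (1 - s ^ 2) ^ (-(1 : ℝ) / 2) * exp (-(s * t)) ≤
      exp t * (2 * √(π / t)) := calc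
    _ ≤ ∫ s in Ioo (-1 : ℝ) 1,
          exp t * (halfGammaKernel t (1 - s) + halfGammaKernel t (1 + s)) := by
      refine integral_mono_of_nonneg ?_ ((integrableOn_halfGammaKernel_reflect ht).const_mul _)
        (ae_restrict_of_forall_mem measurableSet_Ioo fun s hs =>
          besselI0_integrand_le ht.le (abs_lt.2 hs))
      refine ae_restrict_of_forall_mem measurableSet_Ioo fun s hs => ?_
      exact mul_nonneg (rpow_nonneg (by nlinarith [hs.1, hs.2]) _) (exp_pos _).le
    _ ≤ exp t * (2 * √(π / t)) := by
      rw [integral_const_mul]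
      gcongr
      exact integral_halfGammaKernel_reflect_le ht
  calc besselI0 t ≤ 1 / π * (exp t * (2 * √(π / t))) := by
        unfold besselI0
        gcongr
    _ = 2 * exp t / √(π * t) := by
        rw [sqrt_div' _ ht.le, sqrt_mul' _ ht.le]
        field_simp
        rw [sq_sqrt pi_pos.le]
end

section
/- Let ν : ℕ → ℝ satisfy ν₀ = 1, νₙ ≤ 1 for all n, and the recursion ν_{n+1} ≥ 1 - (12(1-νₙ) + 2E/S)/(1 - 1/(2S)) for some constants E ≥ 0 and S ≥ 1. Then for all n ≥ 1, νₙ ≥ 1 - (2E/S) · ((12/(1-1/(2S)))ⁿ - 1)/(11 + 1/(2S)) ≥ 1 - (2E/(11S)) (12/(1-1/(2S)))ⁿ. -/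
open Finset

/-! With `dₙ = 1 - νₙ` the hypothesis reads `dₙ₊₁ ≤ a dₙ + b` for `a = 12 / (1 - 1/(2S))` and
`b = (2E/S) / (1 - 1/(2S))`, so from `d₀ = 0` induction gives `dₙ ≤ b (1 + a + ⋯ + aⁿ⁻¹)`.
Summing the geometric series, `b / (a - 1) = (2E/S) / (11 + 1/(2S))`. -/

theorem le_geom_sum_mul_of_le_mul_add {R : Type*} [Semiring R] [PartialOrder R]
    [IsOrderedRing R] {d : ℕ → R} {a b : R} (ha : 0 ≤ a) (h0 : d 0 ≤ 0)
    (hstep : ∀ n, d (n + 1) ≤ a * d n + b) (n : ℕ) :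
    d n ≤ (∑ i ∈ range n, a ^ i) * b := by
  induction n with
  | zero => simpa using h0
  | succ n ih =>
    calc d (n + 1) ≤ a * d n + b := hstep n
      _ ≤ a * ((∑ i ∈ range n, a ^ i) * b) + b := by gcongr
      _ = (∑ i ∈ range (n + 1), a ^ i) * b := by
        rw [geom_sum_succ, add_mul, one_mul, mul_assoc]

theorem mul_sub_one_div_add_le_div_mul {y p k c : ℝ} (hy : 0 ≤ y) (hp : 0 ≤ p) (hk : 0 < k)
    (hc : 0 ≤ c) : y * (p - 1) / (k + c) ≤ y / k * p :=
  calc y * (p - 1) / (k + c) ≤ y * p / (k + c) := by gcongr; linarith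
    _ ≤ y * p / k := by gcongr; linarith
    _ = y / k * p := by ring

theorem nu_recursion_general (E S : ℝ) (hE : 0 ≤ E) (hS : 1 ≤ S) (ν : ℕ → ℝ)
    (h0 : ν 0 = 1)
    (hrec : ∀ n, ν (n + 1) ≥ 1 - (12 * (1 - ν n) + 2 * E / S) / (1 - 1 / (2 * S))) :
    ∀ n : ℕ, 1 ≤ n →
      ν n ≥ 1 - (2 * E / S) * ((12 / (1 - 1 / (2 * S))) ^ n - 1) / (11 + 1 / (2 * S)) ∧
      1 - (2 * E / S) * ((12 / (1 - 1 / (2 * S))) ^ n - 1) / (11 + 1 / (2 * S))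
        ≥ 1 - (2 * E / (11 * S)) * (12 / (1 - 1 / (2 * S))) ^ n := by
  intro n _
  set c := 1 / (2 * S)
  set a := 12 / (1 - c)
  have hc0 : 0 ≤ c := by positivity
  have hc1 : c < 1 := by
    rw [div_lt_one (by linarith)]; linarith
  have ha : 1 < a := by rw [one_lt_div (by linarith)]; linarith
  have hstep : ∀ k, 1 - ν (k + 1) ≤ a * (1 - ν k) + 2 * E / S / (1 - c) := fun k ↦ by
    have := hrec k
    rw [ge_iff_le, add_div, mul_div_right_comm] at this
    linarith
  have hd := le_geom_sum_mul_of_le_mul_add (d := fun k ↦ 1 - ν k) (by positivity)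
    (by simp [h0]) hstep n
  have hsum : (∑ i ∈ range n, a ^ i) * (2 * E / S / (1 - c))
      = 2 * E / S * (a ^ n - 1) / (11 + c) := by
    have hc : 1 - c ≠ 0 := by linarith
    have hden : (a - 1) * (1 - c) = 11 + c := by
      simp only [a]; field_simp; ring
    rw [geom_sum_eq ha.ne', ← hden]
    field_simp
  have h11 : 2 * E / (11 * S) = 2 * E / S / 11 := by ring
  refine ⟨by rw [hsum] at hd; linarith, ?_⟩
  rw [h11, ge_iff_le, sub_le_sub_iff_left]
  exact mul_sub_one_div_add_le_div_mul (by positivity) (by positivity) (by norm_num) hc0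

theorem nu_recursion (E S : ℝ) (hE : 0 ≤ E) (hS : 1 ≤ S) (ν : ℕ → ℝ)
    (h0 : ν 0 = 1) (hle : ∀ n, ν n ≤ 1)
    (hrec : ∀ n, ν (n + 1) ≥ 1 - (12 * (1 - ν n) + 2 * E / S) / (1 - 1 / (2 * S))) :
    ∀ n : ℕ, 1 ≤ n →
      ν n ≥ 1 - (2 * E / S) * ((12 / (1 - 1 / (2 * S))) ^ n - 1) / (11 + 1 / (2 * S)) ∧
      1 - (2 * E / S) * ((12 / (1 - 1 / (2 * S))) ^ n - 1) / (11 + 1 / (2 * S))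
        ≥ 1 - (2 * E / (11 * S)) * (12 / (1 - 1 / (2 * S))) ^ n :=
  nu_recursion_general E S hE hS ν h0 hrec
end

section
/- For all real x with 0 < |p| ≤ 2 (p ∈ ℝ³) and β, S > 0, the bound ln((1 - e^{-βS|p|²(1-|p|²/12)})/(1 - e^{-βS|p|²})) ≥ -(βS|p|⁴/12) · 1/(e^{2βS|p|²/3} - 1) holds. -/
/-! With `u = e^{-a}` and `v = e^{-b}` for `0 < a ≤ b`, the bound `log r ≥ 1 - 1/r` gives
`log ((1 - u) / (1 - v)) ≥ -(u - v) / (1 - u)`, and `u - v ≤ u (b - a)` because `1 - e^{-t} ≤ t`.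
Since `u / (1 - u) = 1 / (e^a - 1)` decreases in `a`, the theorem follows with
`a = βS|p|²(1 - |p|²/12) ≥ 2βS|p|²/3` and `b = βS|p|²`. -/

open Real

namespace Real

lemma exp_neg_sub_exp_neg_le (a b : ℝ) : exp (-a) - exp (-b) ≤ exp (-a) * (b - a) := by
  have hsplit : exp (-b) = exp (-a) * exp (-(b - a)) := by rw [← exp_add]; ring_nf
  rw [hsplit]
  nlinarith [one_sub_le_exp_neg (b - a), exp_pos (-a)]

lemma exp_neg_div_one_sub_exp_neg (a : ℝ) : exp (-a) / (1 - exp (-a)) = 1 / (exp a - 1) := by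
  rw [← mul_div_mul_right _ _ (exp_ne_zero a), sub_mul, ← exp_add, neg_add_cancel, exp_zero,
    one_mul]

lemma log_div_one_sub_exp_neg_ge {a b : ℝ} (ha : 0 < a) (hab : a ≤ b) :
    log ((1 - exp (-a)) / (1 - exp (-b))) ≥ -(b - a) * (1 / (exp a - 1)) := by
  have hu : 0 < 1 - exp (-a) := by simp [exp_lt_one_iff, ha]
  have hv : 0 < 1 - exp (-b) := by simp [exp_lt_one_iff, ha.trans_le hab]
  calc -(b - a) * (1 / (exp a - 1)) = -(exp (-a) * (b - a)) / (1 - exp (-a)) := by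
        rw [← exp_neg_div_one_sub_exp_neg]; ring
    _ ≤ -(exp (-a) - exp (-b)) / (1 - exp (-a)) := by
        gcongr; exact exp_neg_sub_exp_neg_le a b
    _ = 1 - ((1 - exp (-a)) / (1 - exp (-b)))⁻¹ := by field_simp; ring
    _ ≤ log ((1 - exp (-a)) / (1 - exp (-b))) := one_sub_inv_le_log_of_pos (div_pos hu hv)

end Real

theorem log_ratio_bound (β S : ℝ) (hβ : 0 < β) (hS : 0 < S)
    (p : EuclideanSpace ℝ (Fin 3)) (hp : p ≠ 0) (hp2 : ‖p‖ ≤ 2) :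
    Real.log ((1 - Real.exp (-(β * S * ‖p‖ ^ 2 * (1 - ‖p‖ ^ 2 / 12)))) /
        (1 - Real.exp (-(β * S * ‖p‖ ^ 2))))
      ≥ -(β * S * ‖p‖ ^ 4 / 12) * (1 / (Real.exp (2 * β * S * ‖p‖ ^ 2 / 3) - 1)) := by
  set x := β * S * ‖p‖ ^ 2 with hx
  have hx_pos : 0 < x := by have := norm_pos_iff.mpr hp; positivity
  have hp_sq : ‖p‖ ^ 2 ≤ 4 := by nlinarith [norm_nonneg p]
  have hc_le_a : 2 * β * S * ‖p‖ ^ 2 / 3 ≤ x * (1 - ‖p‖ ^ 2 / 12) := by nlinarith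
  have ha_le_b : x * (1 - ‖p‖ ^ 2 / 12) ≤ x := by nlinarith [sq_nonneg ‖p‖]
  have hc_pos : 0 < 2 * β * S * ‖p‖ ^ 2 / 3 := by linarith
  have hgap : β * S * ‖p‖ ^ 4 / 12 = x - x * (1 - ‖p‖ ^ 2 / 12) := by rw [hx]; ring
  calc -(β * S * ‖p‖ ^ 4 / 12) * (1 / (Real.exp (2 * β * S * ‖p‖ ^ 2 / 3) - 1))
      ≤ -(x - x * (1 - ‖p‖ ^ 2 / 12)) * (1 / (Real.exp (x * (1 - ‖p‖ ^ 2 / 12)) - 1)) := by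
        rw [hgap, neg_mul, neg_mul, neg_le_neg_iff]
        gcongr
        linarith [add_one_le_exp (2 * β * S * ‖p‖ ^ 2 / 3)]
    _ ≤ _ := log_div_one_sub_exp_neg_ge (hc_pos.trans_le hc_le_a) ha_le_b
end

section
/- Let A and B be operators on a finite-dimensional Hilbert space with 0 ≤ A ≤ Id and B positive definite. Then Tr(B^{1/2}AB^{1/2} · ln(B^{1/2}AB^{1/2})) ≤ Tr(B^{1/2}AB^{1/2} · ln B). -/
open Matrix ComplexOrder Filter Real


private lemma tendsto_log_ratio (a : ℝ) (ha : 0 < a) :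
    Tendsto (fun t : ℝ => Real.log (a + t) - Real.log (1 + t)) atTop (nhds 0) := by
  have h1 : Tendsto (fun t : ℝ => (a - 1) / (1 + t)) atTop (nhds 0) := by
    apply Tendsto.div_atTop tendsto_const_nhds
    exact tendsto_atTop_add_const_left _ 1 tendsto_id
  have h2 : Tendsto (fun t : ℝ => 1 + (a - 1) / (1 + t)) atTop (nhds 1) := by
    simpa using h1.const_add 1
  have h3 : Tendsto (fun t : ℝ => Real.log (1 + (a - 1) / (1 + t))) atTop (nhds 0) := by
    have := (Real.continuousAt_log (x := 1) one_ne_zero).tendsto.comp h2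
    simpa [Function.comp_def] using this
  refine h3.congr' ?_
  filter_upwards [eventually_gt_atTop 0] with t ht
  have h1t : (0:ℝ) < 1 + t := by linarith
  have hat : (0:ℝ) < a + t := by linarith
  rw [show 1 + (a - 1) / (1 + t) = (a + t) / (1 + t) by field_simp; ring]
  rw [Real.log_div hat.ne' h1t.ne']

private lemma scalar_key {d : ℕ} (lam : ℝ) (hlam : 0 < lam) (c mu : Fin d → ℝ)
    (hc : ∀ j, 0 ≤ c j) (hmu : ∀ j, 0 < mu j) (hsum : ∑ j, c j = 1)
    (hmono : ∀ t : ℝ, 0 < t → ∑ j, c j * (mu j + t)⁻¹ ≤ (lam + t)⁻¹) :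
    Real.log lam ≤ ∑ j, c j * Real.log (mu j) := by
  set F : ℝ → ℝ := fun t => Real.log (lam + t) - ∑ j, c j * Real.log (mu j + t) with hF
  have hd : ∀ t : ℝ, 0 ≤ t → HasDerivAt F ((lam + t)⁻¹ - ∑ j, c j * (mu j + t)⁻¹) t := by
    intro t ht
    have h1 : HasDerivAt (fun t : ℝ => Real.log (lam + t)) (lam + t)⁻¹ t := by
      have : HasDerivAt (fun t : ℝ => lam + t) 1 t := (hasDerivAt_id t).const_add lam
      simpa using this.log (by positivity)
    have h2 : HasDerivAt (fun t : ℝ => ∑ j, c j * Real.log (mu j + t))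
        (∑ j, c j * (mu j + t)⁻¹) t := by
      apply HasDerivAt.fun_sum
      intro j _
      have : HasDerivAt (fun t : ℝ => mu j + t) 1 t := (hasDerivAt_id t).const_add (mu j)
      simpa using (this.log (by have := hmu j; positivity)).const_mul (c j)
    exact h1.sub h2
  have hmonoF : MonotoneOn F (Set.Ici 0) := by
    apply monotoneOn_of_deriv_nonneg (convex_Ici 0)
    · exact fun t ht => ((hd t ht).continuousAt).continuousWithinAt
    · intro t ht
      rw [interior_Ici] at ht
      exact ((hd t (le_of_lt ht)).differentiableAt).differentiableWithinAt
    · intro t ht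
      rw [interior_Ici] at ht
      rw [(hd t (le_of_lt ht)).deriv]
      have := hmono t ht
      linarith
  have hlim : Tendsto F atTop (nhds 0) := by
    have heq : ∀ t : ℝ, 0 < t → F t =
        (Real.log (lam + t) - Real.log (1 + t))
          - ∑ j, c j * (Real.log (mu j + t) - Real.log (1 + t)) := by
      intro t ht
      simp only [hF, mul_sub, Finset.sum_sub_distrib, ← Finset.sum_mul, hsum]
      ring
    have h1 := tendsto_log_ratio lam hlam
    have h2 : Tendsto (fun t => ∑ j, c j * (Real.log (mu j + t) - Real.log (1 + t)))
        atTop (nhds 0) := by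
      have : Tendsto (fun t => ∑ j, c j * (Real.log (mu j + t) - Real.log (1 + t)))
          atTop (nhds (∑ j : Fin d, c j * 0)) := by
        apply tendsto_finset_sum
        intro j _
        exact (tendsto_log_ratio (mu j) (hmu j)).const_mul (c j)
      simpa using this
    have := h1.sub h2
    rw [sub_zero] at this
    refine this.congr' ?_
    filter_upwards [eventually_gt_atTop 0] with t ht
    exact (heq t ht).symm
  have hF0 : F 0 ≤ 0 := by
    refine ge_of_tendsto hlim ?_
    filter_upwards [eventually_ge_atTop 0] with t ht
    exact hmonoF (Set.mem_Ici.mpr le_rfl) (Set.mem_Ici.mpr ht) ht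
  simpa [hF] using hF0


private lemma conj_dot (P M : Matrix (Fin d) (Fin d) ℂ) (v : Fin d → ℂ) :
    star v ⬝ᵥ ((Pᴴ * M * P) *ᵥ v) = star (P *ᵥ v) ⬝ᵥ (M *ᵥ (P *ᵥ v)) := by
  rw [star_mulVec, ← mulVec_mulVec, ← mulVec_mulVec, dotProduct_mulVec]

private lemma conj_diag_mul (V : Matrix (Fin d) (Fin d) ℂ)
    (hV' : star V * V = 1) (f g : Fin d → ℂ) :
    (V * diagonal f * star V) * (V * diagonal g * star V)
      = V * diagonal (f * g) * star V := by
  simp only [mul_assoc]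
  rw [← mul_assoc (star V) V, hV', one_mul, ← mul_assoc (diagonal f), diagonal_mul_diagonal]
  rfl

private lemma conj_diag_inv (V : Matrix (Fin d) (Fin d) ℂ) (hV : V * star V = 1)
    (hV' : star V * V = 1) (f : Fin d → ℂ) (hf : ∀ j, f j ≠ 0) :
    (V * diagonal f * star V)⁻¹ = V * diagonal (fun j => (f j)⁻¹) * star V := by
  apply inv_eq_right_inv
  rw [conj_diag_mul V hV' f _]
  have : (f * fun j => (f j)⁻¹) = fun _ => (1:ℂ) := by
    funext j; simp [Pi.mul_apply, mul_inv_cancel₀ (hf j)]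
  rw [this, diagonal_one, mul_one, hV]

private lemma unit_col {H : Matrix (Fin d) (Fin d) ℂ} (hH : H.IsHermitian) (i : Fin d) :
    star ⇑(hH.eigenvectorBasis i) ⬝ᵥ ⇑(hH.eigenvectorBasis i) = 1 := by
  have hV' : star (hH.eigenvectorUnitary : Matrix (Fin d) (Fin d) ℂ)
      * (hH.eigenvectorUnitary : Matrix (Fin d) (Fin d) ℂ) = 1 :=
    Unitary.coe_star_mul_self hH.eigenvectorUnitary
  have h : (star (hH.eigenvectorUnitary : Matrix (Fin d) (Fin d) ℂ)
      * (hH.eigenvectorUnitary : Matrix (Fin d) (Fin d) ℂ)) i i = 1 := by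
    rw [hV']; simp [Matrix.one_apply]
  simpa [Matrix.mul_apply, Matrix.star_apply, dotProduct,
    Matrix.IsHermitian.eigenvectorUnitary_apply] using h

private lemma psd1 {C : Matrix (Fin d) (Fin d) ℂ} (hC : C.PosDef)
    (h1 : ((1 : Matrix (Fin d) (Fin d) ℂ) - C).PosSemidef) : (C⁻¹ - 1).PosSemidef := by
  have hW : (hC.1.eigenvectorUnitary : Matrix (Fin d) (Fin d) ℂ)
      * star (hC.1.eigenvectorUnitary : Matrix (Fin d) (Fin d) ℂ) = 1 :=
    Unitary.coe_mul_star_self hC.1.eigenvectorUnitary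
  have hW' : star (hC.1.eigenvectorUnitary : Matrix (Fin d) (Fin d) ℂ)
      * (hC.1.eigenvectorUnitary : Matrix (Fin d) (Fin d) ℂ) = 1 :=
    Unitary.coe_star_mul_self hC.1.eigenvectorUnitary
  set W : Matrix (Fin d) (Fin d) ℂ := (hC.1.eigenvectorUnitary : Matrix (Fin d) (Fin d) ℂ)
    with hWdef
  set γ : Fin d → ℝ := hC.1.eigenvalues with hγ
  have hγpos : ∀ i, 0 < γ i := hC.eigenvalues_pos
  have hγle : ∀ i, γ i ≤ 1 := by
    intro i
    have hx := h1.re_dotProduct_nonneg ⇑(hC.1.eigenvectorBasis i)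
    rw [sub_mulVec, one_mulVec, hC.1.mulVec_eigenvectorBasis, dotProduct_sub,
      dotProduct_smul, unit_col hC.1 i] at hx
    rw [show (1 - hC.1.eigenvalues i • (1:ℂ)) = ((1 - γ i : ℝ) : ℂ) by
      push_cast [Complex.real_smul]; ring] at hx
    have : (0:ℝ) ≤ 1 - γ i := by simpa using hx
    linarith
  have hCspec : C = W * diagonal (fun i => ((γ i : ℝ) : ℂ)) * star W := by
    simpa [Function.comp_def] using hC.1.spectral_theorem
  have hCinv : C⁻¹ = W * diagonal (fun i => (((γ i)⁻¹ : ℝ) : ℂ)) * star W := by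
    rw [hCspec, conj_diag_inv W hW hW' _ (fun j => by
      simpa using (hγpos j).ne')]
    simp [Complex.ofReal_inv]
  have key : C⁻¹ - 1 = W * diagonal (fun i => (((γ i)⁻¹ - 1 : ℝ) : ℂ)) * star W := by
    rw [hCinv]
    have hd2 : diagonal (fun i => (((γ i)⁻¹ - 1 : ℝ) : ℂ))
        = diagonal (fun i => (((γ i)⁻¹ : ℝ) : ℂ)) - 1 := by
      rw [← diagonal_one, diagonal_sub]
      congr 1
      funext j
      push_cast
      ring
    rw [hd2, mul_sub, sub_mul, mul_one, hW]
  rw [key, star_eq_conjTranspose]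
  have hdiag : (diagonal (fun i => (((γ i)⁻¹ - 1 : ℝ) : ℂ))).PosSemidef := by
    apply PosSemidef.diagonal
    intro i
    simp only [Pi.zero_apply, Complex.zero_le_real]
    have h2 := hγpos i
    have h3 : 0 < (γ i)⁻¹ := inv_pos.mpr h2
    have h4 : γ i * (γ i)⁻¹ = 1 := mul_inv_cancel₀ h2.ne'
    have h5 := hγle i
    have h6 : 1 ≤ (γ i)⁻¹ := by nlinarith [mul_le_mul_of_nonneg_right h5 (le_of_lt h3)]
    linarith
  exact hdiag.mul_mul_conjTranspose_same W

open scoped MatrixOrder in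
private lemma sqrt_psd' {d : ℕ} {N : Matrix (Fin d) (Fin d) ℂ} (hN : N.PosSemidef) :
    (hN.1.cfc Real.sqrt).PosSemidef := by
  rw [← hN.1.cfc_eq]
  exact Matrix.nonneg_iff_posSemidef.mp (cfc_nonneg (fun x _ => Real.sqrt_nonneg x))

open scoped MatrixOrder in
private lemma sqrt_mul_self' {d : ℕ} {N : Matrix (Fin d) (Fin d) ℂ} (hN : N.PosSemidef) :
    hN.1.cfc Real.sqrt * hN.1.cfc Real.sqrt = N := by
  have h0 : (0 : Matrix (Fin d) (Fin d) ℂ) ≤ N := Matrix.nonneg_iff_posSemidef.mpr hN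
  rw [← hN.1.cfc_eq, ← cfc_mul Real.sqrt Real.sqrt N]
  conv_rhs => rw [← cfc_id' ℝ N]
  apply cfc_congr
  intro x hx
  exact Real.mul_self_sqrt (spectrum_nonneg_of_nonneg h0 hx)

private lemma inv_antitone {M N : Matrix (Fin d) (Fin d) ℂ} (hM : M.PosDef) (hN : N.PosDef)
    (hMN : (N - M).PosSemidef) : (M⁻¹ - N⁻¹).PosSemidef := by
  set S := hN.posSemidef.1.cfc Real.sqrt with hSdef
  have hSpsd : S.PosSemidef := sqrt_psd' hN.posSemidef
  have hSS : S * S = N := sqrt_mul_self' hN.posSemidef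
  have hdet : IsUnit S.det := by
    have h : S.det * S.det = N.det := by rw [← det_mul, hSS]
    have hNdet : N.det ≠ 0 := hN.det_pos.ne'
    refine isUnit_iff_ne_zero.mpr fun h0 => hNdet ?_
    rw [← h, h0, mul_zero]
  have hSinv : S⁻¹ * S = 1 := nonsing_inv_mul S hdet
  have hSinv' : S * S⁻¹ = 1 := mul_nonsing_inv S hdet
  have hSinvH : (S⁻¹)ᴴ = S⁻¹ := by rw [conjTranspose_nonsing_inv, hSpsd.1]
  set C := S⁻¹ * M * S⁻¹ with hCdef
  have hCpd : C.PosDef := by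
    refine PosDef.of_dotProduct_mulVec_pos ?_ ?_
    · show Cᴴ = C
      rw [hCdef, conjTranspose_mul, conjTranspose_mul, hSinvH, hM.1.eq, mul_assoc]
    · intro v hv
      have h1 : star v ⬝ᵥ (C *ᵥ v) = star (S⁻¹ *ᵥ v) ⬝ᵥ (M *ᵥ (S⁻¹ *ᵥ v)) := by
        rw [hCdef, show S⁻¹ * M * S⁻¹ = (S⁻¹)ᴴ * M * S⁻¹ by rw [hSinvH], conj_dot]
      rw [h1]
      apply hM.dotProduct_mulVec_pos
      intro h0
      apply hv
      have : v = S *ᵥ (S⁻¹ *ᵥ v) := by rw [mulVec_mulVec, hSinv', one_mulVec]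
      rw [this, h0, mulVec_zero]
  have h1C : ((1 : Matrix (Fin d) (Fin d) ℂ) - C).PosSemidef := by
    have heq : (1 : Matrix (Fin d) (Fin d) ℂ) - C = (S⁻¹)ᴴ * (N - M) * S⁻¹ := by
      rw [hSinvH, mul_sub, sub_mul, hCdef]
      congr 1
      rw [← hSS, ← mul_assoc, mul_assoc (S⁻¹ * S), show S⁻¹ * S = 1 from hSinv, one_mul,
        hSinv']
    rw [heq]
    exact hMN.conjTranspose_mul_mul_same S⁻¹
  have hC1 := psd1 hCpd h1C
  have hCinv : C⁻¹ = S * M⁻¹ * S := by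
    rw [hCdef, Matrix.mul_inv_rev, Matrix.mul_inv_rev, nonsing_inv_nonsing_inv S hdet, mul_assoc]
  have key : M⁻¹ - N⁻¹ = (S⁻¹)ᴴ * (C⁻¹ - 1) * S⁻¹ := by
    rw [hSinvH, hCinv, mul_sub, sub_mul, mul_one]
    congr 1
    · rw [← mul_assoc, ← mul_assoc, hSinv, one_mul, mul_assoc, hSinv', mul_one]
    · rw [← hSS, Matrix.mul_inv_rev]
  rw [key]
  exact hC1.conjTranspose_mul_mul_same S⁻¹

private lemma star_col_dot (V : Matrix (Fin d) (Fin d) ℂ) (v : Fin d → ℂ) :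
    star (star V *ᵥ v) = star v ᵥ* V := by
  rw [star_mulVec, star_eq_conjTranspose, conjTranspose_conjTranspose]

private lemma quadform (V : Matrix (Fin d) (Fin d) ℂ) (g : Fin d → ℝ) (v : Fin d → ℂ) :
    (star v ⬝ᵥ ((V * diagonal (fun j => (g j : ℂ)) * star V) *ᵥ v)).re
      = ∑ j, g j * Complex.normSq ((star V *ᵥ v) j) := by
  set w := star V *ᵥ v with hw
  have : (V * diagonal (fun j => (g j : ℂ)) * star V) *ᵥ v
      = V *ᵥ (diagonal (fun j => (g j : ℂ)) *ᵥ w) := by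
    rw [hw, mulVec_mulVec, mulVec_mulVec]
  rw [this, dotProduct_mulVec, ← star_col_dot, ← hw]
  simp only [dotProduct, mulVec_diagonal, Pi.star_apply, Complex.re_sum]
  congr 1; ext j
  have h1 : star (w j) * ((g j : ℂ) * w j) = (g j : ℂ) * (star (w j) * w j) := by ring
  rw [h1, Complex.star_def, ← Complex.normSq_eq_conj_mul_self, ← Complex.ofReal_mul,
    Complex.ofReal_re]

private lemma key_vec {X B : Matrix (Fin d) (Fin d) ℂ} (hX : X.PosSemidef) (hB : B.PosDef)
    (hBX : (B - X).PosSemidef) (u : Fin d → ℂ) (hu : star u ⬝ᵥ u = 1)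
    {lam : ℝ} (hlam : 0 < lam) (huX : X *ᵥ u = lam • u) :
    Real.log lam ≤ (star u ⬝ᵥ ((hB.1.cfc Real.log) *ᵥ u)).re := by
  set V : Matrix (Fin d) (Fin d) ℂ := (hB.1.eigenvectorUnitary : Matrix (Fin d) (Fin d) ℂ)
    with hVdef
  have hV : V * star V = 1 := Unitary.coe_mul_star_self hB.1.eigenvectorUnitary
  have hV' : star V * V = 1 := Unitary.coe_star_mul_self hB.1.eigenvectorUnitary
  set μ : Fin d → ℝ := hB.1.eigenvalues with hμ
  have hμpos : ∀ j, 0 < μ j := hB.eigenvalues_pos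
  set c : Fin d → ℝ := fun j => Complex.normSq ((star V *ᵥ u) j) with hc
  have hcnn : ∀ j, 0 ≤ c j := fun j => Complex.normSq_nonneg _
  -- B spectral
  have hBspec : B = V * diagonal (fun j => ((μ j : ℝ) : ℂ)) * star V := by
    simpa [Function.comp_def] using hB.1.spectral_theorem
  -- sum of c = 1
  have hsum : ∑ j, c j = 1 := by
    have h1 : V * diagonal (fun j => (((1:ℝ) : ℝ) : ℂ)) * star V = 1 := by
      have : diagonal (fun _ : Fin d => (((1:ℝ)) : ℂ)) = 1 := by
        rw [← diagonal_one]; norm_num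
      rw [this, mul_one, hV]
    have h2 := quadform V (fun _ => (1:ℝ)) u
    rw [h1] at h2
    rw [one_mulVec, hu] at h2
    simpa using h2.symm
  -- smul one diagonal helper
  have smul_one_diag : ∀ z : ℂ, z • (1:Matrix (Fin d) (Fin d) ℂ) = diagonal (fun _ => z) := by
    intro z; ext i j; by_cases h : i = j <;> simp [h, Matrix.one_apply, Matrix.diagonal_apply]
  -- monotonicity input
  have hmono : ∀ t : ℝ, 0 < t → ∑ j, c j * (μ j + t)⁻¹ ≤ (lam + t)⁻¹ := by
    intro t ht
    set Mt := X + (t:ℂ) • 1 with hMtdef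
    set Nt := B + (t:ℂ) • 1 with hNtdef
    have htpd : ((t:ℂ) • (1:Matrix (Fin d) (Fin d) ℂ)).PosDef := by
      rw [smul_one_diag, Matrix.posDef_diagonal_iff]
      intro i
      exact_mod_cast Complex.zero_lt_real.mpr ht
    have hMt : Mt.PosDef := Matrix.PosDef.posSemidef_add hX htpd
    have hNt : Nt.PosDef := Matrix.PosDef.posSemidef_add hB.posSemidef htpd
    have hsub : Nt - Mt = B - X := by rw [hMtdef, hNtdef]; abel
    have hinv := inv_antitone hMt hNt (by rw [hsub]; exact hBX)
    have hre := hinv.re_dotProduct_nonneg u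
    -- compute Nt spectral and inverse
    have hNtspec : Nt = V * diagonal (fun j => ((μ j + t : ℝ) : ℂ)) * star V := by
      have hdiag : diagonal (fun j : Fin d => ((μ j + t : ℝ) : ℂ))
          = diagonal (fun j => ((μ j : ℝ) : ℂ)) + (t:ℂ) • 1 := by
        rw [smul_one_diag, diagonal_add]
        congr 1; funext j; push_cast; ring
      rw [hNtdef, hBspec, hdiag, mul_add, add_mul]
      congr 1
      rw [mul_smul_comm, mul_one, smul_mul_assoc, hV]
    have hNtinv : Nt⁻¹ = V * diagonal (fun j => (((μ j + t)⁻¹ : ℝ) : ℂ)) * star V := by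
      rw [hNtspec, conj_diag_inv V hV hV' _ (fun j => by
        have := hμpos j
        simp only [ne_eq, Complex.ofReal_eq_zero]
        positivity)]
      simp only [← Complex.ofReal_inv]
    have hNtre : (star u ⬝ᵥ (Nt⁻¹ *ᵥ u)).re = ∑ j, (μ j + t)⁻¹ * c j := by
      rw [hNtinv]; exact quadform V (fun j => (μ j + t)⁻¹) u
    -- compute Mt inverse on u
    have hMtu : Mt *ᵥ u = (((lam + t : ℝ)) : ℂ) • u := by
      rw [hMtdef, add_mulVec, huX, smul_mulVec, one_mulVec]
      rw [show lam • u = ((lam : ℝ) : ℂ) • u by funext i; simp [Complex.real_smul]]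
      rw [← add_smul]; congr 1; push_cast; ring
    have hltpos : ((lam + t : ℝ) : ℂ) ≠ 0 := by
      simp only [ne_eq, Complex.ofReal_eq_zero]; positivity
    have hMtinvu : Mt⁻¹ *ᵥ u = (((lam + t : ℝ) : ℂ))⁻¹ • u := by
      have h0 : Mt⁻¹ *ᵥ (Mt *ᵥ u) = u := by
        rw [mulVec_mulVec, Matrix.nonsing_inv_mul _ ((Matrix.isUnit_iff_isUnit_det _).mp
          hMt.isUnit), one_mulVec]
      rw [hMtu, mulVec_smul] at h0
      calc Mt⁻¹ *ᵥ u = (((lam + t : ℝ) : ℂ))⁻¹ • ((((lam + t : ℝ)) : ℂ) • (Mt⁻¹ *ᵥ u)) := by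
            rw [smul_smul, inv_mul_cancel₀ hltpos, one_smul]
        _ = (((lam + t : ℝ) : ℂ))⁻¹ • u := by rw [h0]
    have hMtre : (star u ⬝ᵥ (Mt⁻¹ *ᵥ u)).re = (lam + t)⁻¹ := by
      rw [hMtinvu, dotProduct_smul, hu, smul_eq_mul, mul_one, ← Complex.ofReal_inv,
        Complex.ofReal_re]
    -- combine
    rw [sub_mulVec, dotProduct_sub] at hre
    have : (star u ⬝ᵥ (Nt⁻¹ *ᵥ u)).re ≤ (star u ⬝ᵥ (Mt⁻¹ *ᵥ u)).re := by
      have hre' : 0 ≤ (star u ⬝ᵥ (Mt⁻¹ *ᵥ u) - star u ⬝ᵥ (Nt⁻¹ *ᵥ u)).re := hre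
      rw [Complex.sub_re] at hre'
      linarith
    rw [hNtre, hMtre] at this
    calc ∑ j, c j * (μ j + t)⁻¹ = ∑ j, (μ j + t)⁻¹ * c j := by
          congr 1; funext j; ring
      _ ≤ (lam + t)⁻¹ := this
  -- conclude
  have hkey := scalar_key lam hlam c μ hcnn hμpos hsum hmono
  have hrhs : (star u ⬝ᵥ ((hB.1.cfc Real.log) *ᵥ u)).re = ∑ j, Real.log (μ j) * c j := by
    have : hB.1.cfc Real.log = V * diagonal (fun j => ((Real.log (μ j) : ℝ) : ℂ)) * star V := rfl
    rw [this]
    exact quadform V (fun j => Real.log (μ j)) u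
  rw [hrhs]
  calc Real.log lam ≤ ∑ j, c j * Real.log (μ j) := hkey
    _ = ∑ j, Real.log (μ j) * c j := by congr 1; funext j; ring

private lemma trace_formula {d : ℕ} (X L : Matrix (Fin d) (Fin d) ℂ) (hH : X.IsHermitian) :
    (X * L).trace = ∑ i, ((hH.eigenvalues i : ℝ) : ℂ)
      * (star ⇑(hH.eigenvectorBasis i) ⬝ᵥ (L *ᵥ ⇑(hH.eigenvectorBasis i))) := by
  set U : Matrix (Fin d) (Fin d) ℂ := (hH.eigenvectorUnitary : Matrix (Fin d) (Fin d) ℂ)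
    with hUdef
  have hspec : X = U * diagonal (fun i => ((hH.eigenvalues i : ℝ) : ℂ)) * star U := by
    simpa [Function.comp_def] using hH.spectral_theorem
  have h1 : X * L = U * ((diagonal (fun i => ((hH.eigenvalues i : ℝ) : ℂ))) * (star U * L)) := by
    conv_lhs => rw [hspec]
    simp only [mul_assoc]
  rw [h1, trace_mul_comm]
  have h2 : diagonal (fun i => ((hH.eigenvalues i : ℝ) : ℂ)) * (star U * L) * U
      = diagonal (fun i => ((hH.eigenvalues i : ℝ) : ℂ)) * (star U * L * U) := by
    simp only [mul_assoc]
  rw [h2]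
  rw [Matrix.trace]
  congr 1
  funext i
  rw [Matrix.diag_apply]
  rw [show (diagonal (fun i => ((hH.eigenvalues i : ℝ) : ℂ)) * (star U * L * U)) i i
      = ((hH.eigenvalues i : ℝ) : ℂ) * (star U * L * U) i i by
    rw [Matrix.diagonal_mul]]
  congr 1
  simp only [Matrix.mul_apply, dotProduct, mulVec, Matrix.star_apply,
    Matrix.IsHermitian.eigenvectorUnitary_apply, Finset.sum_mul, Finset.mul_sum, hUdef]
  rw [Finset.sum_comm]
  congr 1; funext a; congr 1; funext b
  simp only [Pi.star_apply]
  ring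

private lemma cfc_mulVec {d : ℕ} {X : Matrix (Fin d) (Fin d) ℂ} (hH : X.IsHermitian)
    (f : ℝ → ℝ) (i : Fin d) :
    (hH.cfc f) *ᵥ ⇑(hH.eigenvectorBasis i)
      = ((f (hH.eigenvalues i) : ℝ) : ℂ) • ⇑(hH.eigenvectorBasis i) := by
  have : hH.cfc f = (hH.eigenvectorUnitary : Matrix (Fin d) (Fin d) ℂ)
      * diagonal (fun j => ((f (hH.eigenvalues j) : ℝ) : ℂ))
      * star (hH.eigenvectorUnitary : Matrix (Fin d) (Fin d) ℂ) := rfl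
  rw [this, ← mulVec_mulVec, ← mulVec_mulVec, hH.star_eigenvectorUnitary_mulVec,
    diagonal_mulVec_single, mul_one]
  have hsingle : (Pi.single i (((f (hH.eigenvalues i) : ℝ) : ℂ)) : Fin d → ℂ)
      = ((f (hH.eigenvalues i) : ℝ) : ℂ) • (Pi.single i (1:ℂ) : Fin d → ℂ) := by
    funext j
    by_cases h : j = i <;> simp [Pi.single_apply, h]
  rw [hsingle, mulVec_smul, hH.eigenvectorUnitary_mulVec]

theorem trace_log_monotone {d : ℕ}
    (A B : Matrix (Fin d) (Fin d) ℂ)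
    (hA : A.PosSemidef) (hA1 : ((1 : Matrix (Fin d) (Fin d) ℂ) - A).PosSemidef)
    (hB : B.PosDef)
    (hX : (hB.posSemidef.1.cfc Real.sqrt * A * hB.posSemidef.1.cfc Real.sqrt).IsHermitian) :
    ((hB.posSemidef.1.cfc Real.sqrt * A * hB.posSemidef.1.cfc Real.sqrt) * hX.cfc Real.log).trace.re
      ≤ ((hB.posSemidef.1.cfc Real.sqrt * A * hB.posSemidef.1.cfc Real.sqrt) * hB.1.cfc Real.log).trace.re := by
  set S : Matrix (Fin d) (Fin d) ℂ := hB.posSemidef.1.cfc Real.sqrt with hSdef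
  set X : Matrix (Fin d) (Fin d) ℂ := S * A * S with hXdef
  have hS : S.PosSemidef := sqrt_psd' hB.posSemidef
  have hXpsd : X.PosSemidef := by
    have h := hA.conjTranspose_mul_mul_same S
    rwa [hS.1] at h
  have hBX : (B - X).PosSemidef := by
    have h := hA1.conjTranspose_mul_mul_same S
    rw [hS.1] at h
    have heq : S * ((1 : Matrix (Fin d) (Fin d) ℂ) - A) * S = B - X := by
      rw [mul_sub, sub_mul, mul_one, sqrt_mul_self' hB.posSemidef, hXdef]
    rwa [heq] at h
  have hlamnn : ∀ i, 0 ≤ hX.eigenvalues i := fun i => hXpsd.eigenvalues_nonneg i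
  -- LHS computation
  rw [trace_formula X (hX.cfc Real.log) hX, trace_formula X (hB.1.cfc Real.log) hX]
  rw [Complex.re_sum, Complex.re_sum]
  apply Finset.sum_le_sum
  intro i _
  have hunit := unit_col hX i
  have hvec := cfc_mulVec hX Real.log i
  have hlhs : (((hX.eigenvalues i : ℝ) : ℂ) * (star ⇑(hX.eigenvectorBasis i)
      ⬝ᵥ ((hX.cfc Real.log) *ᵥ ⇑(hX.eigenvectorBasis i)))).re
      = hX.eigenvalues i * Real.log (hX.eigenvalues i) := by
    rw [hvec, dotProduct_smul, hunit, smul_eq_mul, mul_one, ← Complex.ofReal_mul,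
      Complex.ofReal_re]
  rw [hlhs]
  have hre : (((hX.eigenvalues i : ℝ) : ℂ) * (star ⇑(hX.eigenvectorBasis i)
      ⬝ᵥ ((hB.1.cfc Real.log) *ᵥ ⇑(hX.eigenvectorBasis i)))).re
      = hX.eigenvalues i * (star ⇑(hX.eigenvectorBasis i)
        ⬝ᵥ ((hB.1.cfc Real.log) *ᵥ ⇑(hX.eigenvectorBasis i))).re := by
    rw [Complex.mul_re, Complex.ofReal_re, Complex.ofReal_im, zero_mul, sub_zero]
  rw [hre]
  rcases eq_or_lt_of_le (hlamnn i) with h0 | hpos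
  · rw [← h0, zero_mul, zero_mul]
  · apply mul_le_mul_of_nonneg_left _ (hlamnn i)
    exact key_vec hXpsd hB hBX _ hunit hpos (hX.mulVec_eigenvectorBasis i)
end
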